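/- The trace norm ‖A‖₁ = Tr(|A|) on M_n(ℂ) is an L-norm: for every A ∈ M_n(ℂ) and all C₁,…,C_k with ∑ᵢ Cᵢ*Cᵢ = I, one has ∑ᵢ ‖CᵢACᵢ*‖₁ ≤ ‖A‖₁. -/

import Mathlib

open Matrix BigOperators ComplexOrder

/-- Square complex matrices. -/
abbrev Mat (n : ℕ) := Matrix (Fin n) (Fin n) ℂ

/-- `N` is a norm on `Mat n`. -/
def IsMatrixNorm {n : ℕ} (N : Mat n → ℝ) : Prop :=
  (∀ A, N A = 0 ↔ A = 0) ∧
  (∀ (c : ℂ) (A : Mat n), N (c • A) = ‖c‖ * N A) ∧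
  (∀ A B : Mat n, N (A + B) ≤ N A + N B)

/-- A set of matrices is C*-convex. -/
def CStarConvex {n : ℕ} (K : Set (Mat n)) : Prop :=
  ∀ (k : ℕ) (C A : Fin k → Mat n), (∀ i, A i ∈ K) →
    (∑ i, (C i)ᴴ * C i = 1) → (∑ i, (C i)ᴴ * A i * C i) ∈ K

/-- `N` is an M-norm. -/
def IsMNorm {n : ℕ} (N : Mat n → ℝ) : Prop :=
  ∀ (k : ℕ) (C X : Fin k → Mat n), (∑ i, (C i)ᴴ * C i = 1) →
    N (∑ i, (C i)ᴴ * X i * C i) ≤ ⨆ i, N (X i)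

/-- `N` is an L-norm. -/
def IsLNorm {n : ℕ} (N : Mat n → ℝ) : Prop :=
  ∀ (k : ℕ) (C : Fin k → Mat n) (X : Mat n), (∑ i, (C i)ᴴ * C i = 1) →
    ∑ i, N (C i * X * (C i)ᴴ) ≤ N X

/-- The dual norm with respect to the pairing `⟨Y|X⟩ = Tr(Yᴴ X)`. -/
noncomputable def dualNorm {n : ℕ} (N : Mat n → ℝ) (Y : Mat n) : ℝ :=
  sSup {r | ∃ X : Mat n, N X ≤ 1 ∧ r = ‖(Yᴴ * X).trace‖}

/-- The operator (spectral) norm of a matrix. -/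
noncomputable def opNorm {n : ℕ} (A : Mat n) : ℝ :=
  ‖Matrix.toEuclideanCLM (𝕜 := ℂ) (n := Fin n) A‖

/-- The trace norm `‖A‖₁ = Tr((AᴴA)^{1/2})`. -/
noncomputable def traceNorm {n : ℕ} (A : Mat n) : ℝ :=
  ((Matrix.posSemidef_conjTranspose_mul_self A).1.eigenvectorUnitary.1 *
    diagonal ((fun x : ℝ => (x : ℂ)) ∘ Real.sqrt ∘ (Matrix.posSemidef_conjTranspose_mul_self A).1.eigenvalues) *
    (star (Matrix.posSemidef_conjTranspose_mul_self A).1.eigenvectorUnitary : Mat n)).trace.re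

/-- The numerical radius. -/
noncomputable def numRadius {n : ℕ} (A : Mat n) : ℝ :=
  sSup {r | ∃ x : EuclideanSpace ℂ (Fin n), ‖x‖ = 1 ∧
    r = ‖inner ℂ x (Matrix.toEuclideanCLM (𝕜 := ℂ) (n := Fin n) A x)‖}

/-! The trace norm is dual to the operator norm: `‖Tr (B X)‖ ≤ ‖B‖ ‖X‖₁`, with equality for the
contraction `V = |X|⁻¹ Xᴴ` (`|X|⁻¹` the pseudo-inverse). Taking such a `Vᵢ` for each `Cᵢ X Cᵢᴴ`
gives `∑ ‖Cᵢ X Cᵢᴴ‖₁ = Tr ((∑ Cᵢᴴ Vᵢ Cᵢ) X)`, and `∑ Cᵢᴴ Vᵢ Cᵢ` is again a contraction: by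
Cauchy–Schwarz, since `∑ ‖Cᵢ x‖² = ‖x‖²`. -/

open scoped Matrix.Norms.L2Operator

namespace ContinuousLinearMap

variable {𝕜 E ι : Type*} [RCLike 𝕜] [NormedAddCommGroup E] [InnerProductSpace 𝕜 E] [CompleteSpace E]
  (s : Finset ι) (T : ι → E →L[𝕜] E)

lemma sum_norm_apply_sq_of_sum_star_mul_self_eq_one (hT : ∑ i ∈ s, star (T i) * T i = 1)
    (x : E) : ∑ i ∈ s, ‖T i x‖ ^ 2 = ‖x‖ ^ 2 := by
  simp only [apply_norm_sq_eq_inner_adjoint_left, ← star_eq_adjoint, ← mul_def, ← map_sum,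
    ← sum_inner, ← _root_.sum_apply, hT, one_apply_eq_self, inner_self_eq_norm_sq]

lemma norm_sum_star_mul_mul_le_one (S : ι → E →L[𝕜] E) (hT : ∑ i ∈ s, star (T i) * T i = 1)
    (hS : ∀ i ∈ s, ‖S i‖ ≤ 1) : ‖∑ i ∈ s, star (T i) * S i * T i‖ ≤ 1 := by
  set A := ∑ i ∈ s, star (T i) * S i * T i
  have hT_norm := sum_norm_apply_sq_of_sum_star_mul_self_eq_one s T hT
  refine opNorm_le_bound _ zero_le_one fun x => ?_
  have hA_inner (y : E) : inner 𝕜 y (A x) = ∑ i ∈ s, inner 𝕜 (T i y) (S i (T i x)) := by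
    simp only [A, _root_.sum_apply, inner_sum, mul_apply_eq_comp, star_eq_adjoint,
      adjoint_inner_right]
  have key : ‖A x‖ ^ 2 ≤ ‖A x‖ * ‖x‖ := calc
    ‖A x‖ ^ 2 = ∑ i ∈ s, RCLike.re (inner 𝕜 (T i (A x)) (S i (T i x))) := by
      rw [← inner_self_eq_norm_sq (𝕜 := 𝕜), hA_inner, map_sum]
    _ ≤ ∑ i ∈ s, ‖T i (A x)‖ * ‖T i x‖ := Finset.sum_le_sum fun i hi =>
      (RCLike.re_le_norm _).trans <| (norm_inner_le_norm _ _).trans <|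
        mul_le_mul_of_nonneg_left (by simpa using (S i).le_of_opNorm_le (hS i hi) (T i x))
          (norm_nonneg _)
    _ ≤ √(∑ i ∈ s, ‖T i (A x)‖ ^ 2) * √(∑ i ∈ s, ‖T i x‖ ^ 2) :=
      Real.sum_mul_le_sqrt_mul_sqrt _ _ _
    _ = ‖A x‖ * ‖x‖ := by
      rw [hT_norm, hT_norm, Real.sqrt_sq (norm_nonneg _), Real.sqrt_sq (norm_nonneg _)]
  nlinarith [norm_nonneg (A x), norm_nonneg x]

end ContinuousLinearMap

namespace Matrix

variable {𝕜 : Type*} [RCLike 𝕜] {n : Type*} [Fintype n] [DecidableEq n]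

lemma trace_eq_sum_inner_toEuclideanCLM {ι : Type*} [Fintype ι] (M : Matrix n n 𝕜)
    (b : OrthonormalBasis ι 𝕜 (EuclideanSpace 𝕜 n)) :
    M.trace = ∑ i, inner 𝕜 (b i) (toEuclideanCLM (𝕜 := 𝕜) M (b i)) := by
  rw [← trace_toLin_eq M (EuclideanSpace.basisFun n 𝕜).toBasis,
    ← toEuclideanLin_eq_toLin_orthonormal, LinearMap.trace_eq_sum_inner _ b]
  rfl

lemma IsHermitian.trace_cfc {A : Matrix n n 𝕜} (hA : A.IsHermitian) (f : ℝ → ℝ) :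
    (cfc f A).trace = ∑ i, (f (hA.eigenvalues i) : 𝕜) := by
  rw [hA.cfc_eq, IsHermitian.cfc, Unitary.conjStarAlgAut_apply, trace_mul_cycle,
    Unitary.coe_star_mul_self, one_mul, trace_diagonal]
  rfl

lemma norm_toEuclideanCLM_eigenvectorBasis (X : Matrix n n 𝕜) (j : n) :
    ‖toEuclideanCLM (𝕜 := 𝕜) X ((isHermitian_conjTranspose_mul_self X).eigenvectorBasis j)‖ =
      √((isHermitian_conjTranspose_mul_self X).eigenvalues j) := by
  rw [eq_comm, Real.sqrt_eq_iff_eq_sq ((posSemidef_conjTranspose_mul_self X).eigenvalues_nonneg j)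
    (norm_nonneg _), ← inner_self_eq_norm_sq (𝕜 := 𝕜), ← ContinuousLinearMap.adjoint_inner_right,
    ← ContinuousLinearMap.star_eq_adjoint, ← map_star, ← ContinuousLinearMap.comp_apply,
    ← ContinuousLinearMap.mul_def, ← map_mul, star_eq_conjTranspose,
    (isHermitian_conjTranspose_mul_self X).eigenvalues_eq, EuclideanSpace.inner_eq_star_dotProduct,
    dotProduct_comm]
  rfl

lemma norm_trace_mul_le (B X : Matrix n n 𝕜) :
    ‖(B * X).trace‖ ≤ ‖B‖ * RCLike.re (cfc Real.sqrt (Xᴴ * X)).trace := by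
  set hX := isHermitian_conjTranspose_mul_self X
  set b := hX.eigenvectorBasis
  rw [hX.trace_cfc, map_sum, Finset.mul_sum, trace_eq_sum_inner_toEuclideanCLM _ b]
  refine (norm_sum_le _ _).trans (Finset.sum_le_sum fun j _ => ?_)
  rw [RCLike.ofReal_re, ← norm_toEuclideanCLM_eigenvectorBasis, map_mul, mul_apply_eq_comp]
  calc ‖inner 𝕜 (b j) (toEuclideanCLM (𝕜 := 𝕜) B (toEuclideanCLM (𝕜 := 𝕜) X (b j)))‖
      ≤ ‖b j‖ * ‖toEuclideanCLM (𝕜 := 𝕜) B (toEuclideanCLM (𝕜 := 𝕜) X (b j))‖ :=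
        norm_inner_le_norm _ _
    _ ≤ ‖B‖ * ‖toEuclideanCLM (𝕜 := 𝕜) X (b j)‖ := by
      rw [b.norm_eq_one, one_mul]
      exact (toEuclideanCLM (𝕜 := 𝕜) B).le_opNorm _

lemma norm_sum_conjTranspose_mul_mul_le_one {ι : Type*} (s : Finset ι) (C V : ι → Matrix n n 𝕜)
    (hC : ∑ i ∈ s, (C i)ᴴ * C i = 1) (hV : ∀ i ∈ s, ‖V i‖ ≤ 1) :
    ‖∑ i ∈ s, (C i)ᴴ * V i * C i‖ ≤ 1 := by
  simp only [← star_eq_conjTranspose] at hC ⊢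
  rw [cstar_norm_def, map_sum]
  simp only [map_mul, map_star]
  refine ContinuousLinearMap.norm_sum_star_mul_mul_le_one s _ _ ?_ hV
  simpa only [map_sum, map_mul, map_star, map_one] using
    congrArg (toEuclideanCLM (𝕜 := 𝕜) (n := n)) hC

lemma exists_norm_le_one_trace_mul_eq (X : Matrix n n ℂ) :
    ∃ V : Matrix n n ℂ, ‖V‖ ≤ 1 ∧ (V * X).trace = (cfc Real.sqrt (Xᴴ * X)).trace := by
  set P := Xᴴ * X
  set G := cfc (fun x => (√x)⁻¹) P
  have hP : IsSelfAdjoint P := isHermitian_conjTranspose_mul_self X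
  have hcfc_mul (f g : ℝ → ℝ) : cfc f P * cfc g P = cfc (fun x => f x * g x) P :=
    (cfc_mul f g P (finite_real_spectrum.continuousOn f) (finite_real_spectrum.continuousOn g)).symm
  -- `(√x)⁻¹ * x = √x` for every real `x`, thanks to `√x = 0` for `x ≤ 0` and `0⁻¹ = 0`.
  have hG_mul : G * P = cfc Real.sqrt P := by
    rw [← cfc_id' ℝ P, hcfc_mul, cfc_id' ℝ P]
    simp_rw [inv_mul_eq_div, Real.div_sqrt]
  refine ⟨G * Xᴴ, ?_, by rw [mul_assoc, hG_mul]⟩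
  have h : ‖(G * Xᴴ) * star (G * Xᴴ)‖ ≤ 1 := by
    rw [star_mul, (cfc_predicate _ P : IsSelfAdjoint G).star_eq, star_eq_conjTranspose,
      conjTranspose_conjTranspose, ← mul_assoc, mul_assoc G, hG_mul, hcfc_mul]
    refine norm_cfc_le zero_le_one fun x _ => ?_
    rw [← div_eq_mul_inv, Real.norm_of_nonneg (by positivity)]
    exact div_self_le_one _
  rw [CStarRing.norm_self_mul_star] at h
  nlinarith [norm_nonneg (G * Xᴴ)]

end Matrix

lemma traceNorm_eq_re_trace_cfc_sqrt {n : ℕ} (X : Mat n) :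
    traceNorm X = (cfc Real.sqrt (Xᴴ * X)).trace.re := by
  rw [(isHermitian_conjTranspose_mul_self X).cfc_eq]
  rfl

lemma traceNorm_nonneg {n : ℕ} (X : Mat n) : 0 ≤ traceNorm X := by
  rw [traceNorm_eq_re_trace_cfc_sqrt, (isHermitian_conjTranspose_mul_self X).trace_cfc,
    Complex.re_sum]
  exact Finset.sum_nonneg fun _ _ => by simp

theorem traceNorm_isLNorm {n : ℕ} : IsLNorm (traceNorm (n := n)) := by
  intro k C X hC
  choose V hV_norm hV_trace using fun i => exists_norm_le_one_trace_mul_eq (C i * X * (C i)ᴴ)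
  have hV_cycle (i : Fin k) :
      (V i * (C i * X * (C i)ᴴ)).trace = ((C i)ᴴ * V i * C i * X).trace := by
    simp only [← mul_assoc]
    rw [trace_mul_cycle]
    simp only [← mul_assoc]
  calc ∑ i, traceNorm (C i * X * (C i)ᴴ)
      = ((∑ i, (C i)ᴴ * V i * C i) * X).trace.re := by
        simp only [traceNorm_eq_re_trace_cfc_sqrt, ← hV_trace, hV_cycle, Finset.sum_mul,
          trace_sum, Complex.re_sum]
    _ ≤ ‖((∑ i, (C i)ᴴ * V i * C i) * X).trace‖ := Complex.re_le_norm _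
    _ ≤ ‖∑ i, (C i)ᴴ * V i * C i‖ * traceNorm X := by
      rw [traceNorm_eq_re_trace_cfc_sqrt]
      exact norm_trace_mul_le _ _
    _ ≤ traceNorm X := mul_le_of_le_one_left (traceNorm_nonneg X)
      (norm_sum_conjTranspose_mul_mul_le_one _ C V hC fun i _ => hV_norm i)
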